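/- For every odd integer n >= 3, the join of K3 with a perfect matching on n-3 vertices (i.e., the disjoint union of (n-3)/2 edges) has exactly (7n-15)/2 edges and has no minor in F3 = {K6 minus an edge, complement of C7, C5 + complement(K2), K_{3,1,3}-hat, Q3, V8}. -/

import Mathlib

namespace TwwPaper

open Finset

/-! ### Twin-width via contraction (partition-merge) sequences -/

/-- Two parts `P`, `Q` are *pure* (homogeneous) in `G`: the graph is either complete or empty
between them.  In the trigraph of a partition, a non-pure pair of parts is joined by a red edge. -/
def Pure {V : Type*} (G : SimpleGraph V) (P Q : Finset V) : Prop :=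
  (∀ x ∈ P, ∀ y ∈ Q, G.Adj x y) ∨ (∀ x ∈ P, ∀ y ∈ Q, ¬ G.Adj x y)

/-- The red degree of a part `P` in the partition `PP`: the number of other parts that are
not pure with respect to `P`. -/
noncomputable def redDeg {V : Type*} (G : SimpleGraph V) (PP : Finset (Finset V)) (P : Finset V) : ℕ :=
  {Q | Q ∈ PP ∧ Q ≠ P ∧ ¬ Pure G P Q}.ncard

/-- `QQ` is obtained from `PP` by merging (contracting) two parts. -/
def Merge {V : Type*} [DecidableEq V] (PP QQ : Finset (Finset V)) : Prop :=
  ∃ A ∈ PP, ∃ B ∈ PP, A ≠ B ∧ QQ = insert (A ∪ B) ((PP.erase A).erase B)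

/-- One contraction step keeping every red degree at most `d`. -/
def Step {V : Type*} [DecidableEq V] (G : SimpleGraph V) (d : ℕ) (PP QQ : Finset (Finset V)) :
    Prop :=
  Merge PP QQ ∧ ∀ P ∈ QQ, redDeg G QQ P ≤ d

/-- `G` admits a `d`-contraction sequence: starting from the partition into singletons one can
merge two parts at a time, always keeping all red degrees at most `d`, until one part remains. -/
def TwwLE {V : Type*} [Fintype V] [DecidableEq V] (G : SimpleGraph V) (d : ℕ) : Prop :=
  Relation.ReflTransGen (Step G d)
    (Finset.univ.image fun v => ({v} : Finset V)) {Finset.univ}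

/-- The twin-width of a finite simple graph. -/
noncomputable def tww {V : Type*} [Fintype V] [DecidableEq V] (G : SimpleGraph V) : ℕ :=
  sInf {d | TwwLE G d}

/-! ### Minors, separators, subgraph containment -/

/-- `H` is a minor of `G`: there is a minor model, i.e. pairwise disjoint nonempty connected
branch sets, one for each vertex of `H`, with an edge of `G` between the branch sets of any two
adjacent vertices of `H`. -/
def IsMinor {α β : Type*} (H : SimpleGraph α) (G : SimpleGraph β) : Prop :=
  ∃ f : α → Set β,
    (∀ a, (f a).Nonempty) ∧
    (∀ a, (G.induce (f a)).Connected) ∧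
    (∀ a b, a ≠ b → Disjoint (f a) (f b)) ∧
    ∀ a b, H.Adj a b → ∃ x ∈ f a, ∃ y ∈ f b, G.Adj x y

/-- `S` is a separator of `G` : deleting `S` leaves a nonempty disconnected graph. -/
def Sep {α : Type*} (G : SimpleGraph α) (S : Set α) : Prop :=
  (Sᶜ : Set α).Nonempty ∧ ¬ (G.induce Sᶜ).Preconnected

/-- `G` contains `F` as a (not necessarily induced) subgraph. -/
def ContainsSubgraph {α β : Type*} (G : SimpleGraph β) (F : SimpleGraph α) : Prop :=
  ∃ f : α → β, Function.Injective f ∧ ∀ a b, F.Adj a b → G.Adj (f a) (f b)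

/-- `G` is internally 4-connected. -/
def Internally4Connected {α : Type*} [Fintype α] (G : SimpleGraph α) : Prop :=
  5 ≤ Fintype.card α ∧
  (∀ S : Set α, S.ncard < 3 → ¬ Sep G S) ∧
  ∀ S : Set α, S.ncard = 3 → Sep G S →
    (∀ a ∈ S, ∀ b ∈ S, ¬ G.Adj a b) ∧ ∃ v ∉ S, G.neighborSet v = S

/-! ### The concrete graphs -/

/-- `K₆` minus one edge. -/
def K6minus : SimpleGraph (Fin 6) where
  Adj a b := a ≠ b ∧ ¬(({a, b} : Finset (Fin 6)) = {0, 1})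
  symm := by
    constructor
    rintro a b ⟨h1, h2⟩
    exact ⟨h1.symm, by rwa [Finset.pair_comm]⟩
  loopless := ⟨fun a h => h.1 rfl⟩

/-- The complement of the 7-cycle. -/
def C7c : SimpleGraph (Fin 7) := (SimpleGraph.cycleGraph 7)ᶜ

/-- Join of two graphs. -/
def joinG {α β : Type*} (G : SimpleGraph α) (H : SimpleGraph β) : SimpleGraph (α ⊕ β) where
  Adj x y :=
    match x, y with
    | Sum.inl a, Sum.inl b => G.Adj a b
    | Sum.inr a, Sum.inr b => H.Adj a b
    | _, _ => True
  symm := by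
    constructor
    rintro (a | a) (b | b) h
    · exact G.adj_symm h
    · exact trivial
    · exact trivial
    · exact H.adj_symm h
  loopless := by
    constructor
    rintro (a | a) h
    · exact G.loopless.irrefl a h
    · exact H.loopless.irrefl a h

/-- The join of `C₅` with the complement of `K₂` (two isolated vertices). -/
def C5K2c : SimpleGraph (Fin 5 ⊕ Fin 2) :=
  joinG (SimpleGraph.cycleGraph 5) (⊥ : SimpleGraph (Fin 2))

/-- The part of a vertex of `K_{3,1,3}`: `{0,1,2}`, `{3}`, `{4,5,6}`. -/
def triPart : Fin 7 → ℕ := fun a => if a.val < 3 then 0 else if a.val = 3 then 1 else 2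

/-- `K_{3,1̂,3}`: the complete tripartite graph `K_{3,1,3}` minus one edge from the middle
vertex `3` to each of the two size-3 parts (the edges `{0,3}` and `{3,4}`). -/
def K313hat : SimpleGraph (Fin 7) where
  Adj a b := triPart a ≠ triPart b ∧ ¬(({a, b} : Finset (Fin 7)) = {0, 3}) ∧
    ¬(({a, b} : Finset (Fin 7)) = {3, 4})
  symm := by
    constructor
    rintro a b ⟨h1, h2, h3⟩
    refine ⟨h1.symm, ?_, ?_⟩ <;> rwa [Finset.pair_comm]
  loopless := ⟨fun a h => h.1 rfl⟩

/-- The cube graph `Q₃`. -/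
def Q3 : SimpleGraph (Fin 2 × Fin 2 × Fin 2) where
  Adj x y := (x.1 ≠ y.1 ∧ x.2 = y.2) ∨ (x.1 = y.1 ∧ x.2.1 ≠ y.2.1 ∧ x.2.2 = y.2.2) ∨
    (x.1 = y.1 ∧ x.2.1 = y.2.1 ∧ x.2.2 ≠ y.2.2)
  symm := by
    constructor
    rintro x y (⟨h1, h2⟩ | ⟨h1, h2, h3⟩ | ⟨h1, h2, h3⟩)
    · exact Or.inl ⟨h1.symm, h2.symm⟩
    · exact Or.inr (Or.inl ⟨h1.symm, h2.symm, h3.symm⟩)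
    · exact Or.inr (Or.inr ⟨h1.symm, h2.symm, h3.symm⟩)
  loopless := by
    constructor
    rintro x (⟨h, -⟩ | ⟨-, h, -⟩ | ⟨-, -, h⟩) <;> exact h rfl

/-- The Wagner graph `V₈`: the 8-cycle plus the four main diagonals. -/
def V8 : SimpleGraph (Fin 8) where
  Adj a b := a ≠ b ∧ (b = a + 1 ∨ a = b + 1 ∨ b = a + 4)
  symm := by
    constructor
    rintro a b ⟨h, h1 | h1 | h1⟩
    · exact ⟨h.symm, Or.inr (Or.inl h1)⟩
    · exact ⟨h.symm, Or.inl h1⟩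
    · refine ⟨h.symm, Or.inr (Or.inr ?_)⟩
      subst h1
      have h4 : (4 : Fin 8) + 4 = 0 := by decide
      rw [add_assoc, h4, add_zero]
  loopless := by constructor; rintro a ⟨h, -⟩; exact h rfl

/-- `K₆` minus a perfect matching (`K₆^≡`), i.e. the octahedron `K_{2,2,2}`. -/
def K6mm3 : SimpleGraph (Fin 6) where
  Adj a b := a.val % 3 ≠ b.val % 3
  symm := ⟨fun _ _ h => h.symm⟩
  loopless := ⟨fun _ h => h rfl⟩

/-- `K₆` minus a matching of size two (`K₆^=`). -/
def K6mm2 : SimpleGraph (Fin 6) where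
  Adj a b := a ≠ b ∧ ¬(({a, b} : Finset (Fin 6)) = {0, 3}) ∧
    ¬(({a, b} : Finset (Fin 6)) = {1, 4})
  symm := by
    constructor
    rintro a b ⟨h1, h2, h3⟩
    refine ⟨h1.symm, ?_, ?_⟩ <;> rwa [Finset.pair_comm]
  loopless := ⟨fun a h => h.1 rfl⟩

/-- The join of the complement of `C₆` with a single vertex. -/
def C6cK1 : SimpleGraph (Fin 6 ⊕ Fin 1) :=
  joinG ((SimpleGraph.cycleGraph 6)ᶜ) (⊥ : SimpleGraph (Fin 1))

/-- A perfect matching graph on `Fin m` (`m` even): `2i` is matched to `2i+1`. -/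
def matchingGraph (m : ℕ) : SimpleGraph (Fin m) where
  Adj a b := a ≠ b ∧ a.val / 2 = b.val / 2
  symm := ⟨fun _ _ h => ⟨h.1.symm, h.2.symm⟩⟩
  loopless := ⟨fun _ h => h.1 rfl⟩

/-- The `m × n` grid graph. -/
def gridGraph (m n : ℕ) : SimpleGraph (Fin m × Fin n) where
  Adj p q := (p.1 = q.1 ∧ (p.2.val + 1 = q.2.val ∨ q.2.val + 1 = p.2.val)) ∨
    (p.2 = q.2 ∧ (p.1.val + 1 = q.1.val ∨ q.1.val + 1 = p.1.val))
  symm := by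
    constructor
    rintro p q (⟨h1, h2⟩ | ⟨h1, h2⟩)
    · exact Or.inl ⟨h1.symm, h2.symm⟩
    · exact Or.inr ⟨h1.symm, h2.symm⟩
  loopless := by constructor; rintro p (⟨-, h | h⟩ | ⟨-, h | h⟩) <;> omega

/-! ### `(Δ,Y)`-operation -/

/-- The `(Δ,Y)`-operation on the triangle `{x,y,z}` of `G`: delete the edges of the triangle
and add a new vertex (`none`) adjacent exactly to `x`, `y`, `z`. -/
def deltaY {α : Type*} (G : SimpleGraph α) (x y z : α) : SimpleGraph (Option α) where
  Adj a b :=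
    match a, b with
    | some a, some b => G.Adj a b ∧ ¬((a = x ∨ a = y ∨ a = z) ∧ (b = x ∨ b = y ∨ b = z))
    | some a, none => a = x ∨ a = y ∨ a = z
    | none, some b => b = x ∨ b = y ∨ b = z
    | none, none => False
  symm := by
    constructor
    rintro (_ | a) (_ | b) h
    · exact h.elim
    · exact h
    · exact h
    · exact ⟨h.1.symm, fun hc => h.2 ⟨hc.2, hc.1⟩⟩
  loopless := by
    constructor
    rintro (_ | a) h
    · exact h
    · exact G.loopless.irrefl a h.1

/-- `G` has a spanning subgraph isomorphic to a member of
`𝓕₃ = {K₆⁻, C₇ᶜ, C₅ + K₂ᶜ, K_{3,1̂,3}, Q₃, V₈}`. -/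
def HasSpanningF3 {α : Type*} (G : SimpleGraph α) : Prop :=
  ∃ H : SimpleGraph α, H ≤ G ∧
    (Nonempty (H ≃g K6minus) ∨ Nonempty (H ≃g C7c) ∨ Nonempty (H ≃g C5K2c) ∨
      Nonempty (H ≃g K313hat) ∨ Nonempty (H ≃g Q3) ∨ Nonempty (H ≃g V8))

/-- `G` has a minor in `𝓕₃`. -/
def HasF3Minor {α : Type*} (G : SimpleGraph α) : Prop :=
  IsMinor K6minus G ∨ IsMinor C7c G ∨ IsMinor C5K2c G ∨ IsMinor K313hat G ∨
    IsMinor Q3 G ∨ IsMinor V8 G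

/-! ### Subdivisions -/

/-- Vertices of the subdivision of `G` in which the edge `ab` (with `a < b`) receives
`ℓ a b` internal (subdivision) vertices: the original vertices plus, for each oriented edge,
`ℓ a b` new vertices. -/
def SubdivVert {α : Type*} [LT α] (G : SimpleGraph α) (ℓ : α → α → ℕ) : Type _ :=
  α ⊕ Σ e : {p : α × α // p.1 < p.2 ∧ G.Adj p.1 p.2}, Fin (ℓ e.1.1 e.1.2)

noncomputable instance SubdivVert.instFintype {α : Type*} [LT α] [Fintype α]
    (G : SimpleGraph α) (ℓ : α → α → ℕ) : Fintype (SubdivVert G ℓ) := by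
  classical
  unfold SubdivVert
  infer_instance

noncomputable instance SubdivVert.instDecidableEq {α : Type*} [LT α] [DecidableEq α]
    (G : SimpleGraph α) (ℓ : α → α → ℕ) : DecidableEq (SubdivVert G ℓ) := by
  classical
  unfold SubdivVert
  infer_instance

/-- The subdivision of `G` in which each edge `ab` (`a < b`) is replaced by a path with
`ℓ a b` internal vertices (so of length `ℓ a b + 1`); an edge with `ℓ a b = 0` stays an edge. -/
def Subdiv {α : Type*} [LT α] (G : SimpleGraph α) (ℓ : α → α → ℕ) :
    SimpleGraph (SubdivVert G ℓ) where
  Adj x y :=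
    match x, y with
    | Sum.inl a, Sum.inl b =>
        G.Adj a b ∧ ((a < b ∧ ℓ a b = 0) ∨ (b < a ∧ ℓ b a = 0))
    | Sum.inl a, Sum.inr ei =>
        (a = ei.1.1.1 ∧ (ei.2 : ℕ) = 0) ∨ (a = ei.1.1.2 ∧ (ei.2 : ℕ) + 1 = ℓ ei.1.1.1 ei.1.1.2)
    | Sum.inr ei, Sum.inl a =>
        (a = ei.1.1.1 ∧ (ei.2 : ℕ) = 0) ∨ (a = ei.1.1.2 ∧ (ei.2 : ℕ) + 1 = ℓ ei.1.1.1 ei.1.1.2)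
    | Sum.inr ei, Sum.inr ej =>
        ei.1 = ej.1 ∧ ((ei.2 : ℕ) + 1 = (ej.2 : ℕ) ∨ (ej.2 : ℕ) + 1 = (ei.2 : ℕ))
  symm := by
    constructor
    rintro (a | ei) (b | ej) h
    · exact ⟨h.1.symm, h.2.symm⟩
    · exact h
    · exact h
    · exact ⟨h.1.symm, h.2.symm⟩
  loopless := by
    constructor
    rintro (a | ei) h
    · exact G.loopless.irrefl a h.1
    · rcases h.2 with h' | h' <;> omega

/-- Lexicographic order on the vertex set of a grid, used to orient its edges. -/
def lexLT {m n : ℕ} : LT (Fin m × Fin n) :=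
  ⟨fun p q => p.1 < q.1 ∨ (p.1 = q.1 ∧ p.2 < q.2)⟩

/-! Deleting three vertices from `K₃ + M`, `M` a perfect matching, leaves a graph of maximum
degree at most one, and this survives passing to minors: in a minor model at most three branch
sets meet the `K₃`, and each other branch set is connected inside `M`, hence lies in a single
matching edge; so outside those three branch sets no vertex has two neighbours. Every member of
`𝓕₃` keeps a vertex with two neighbours after any three vertices are deleted, which is a finite
check. The edge count is the handshake lemma for a join. -/

open Function SimpleGraph Sum

theorem _root_.SimpleGraph.Reachable.apply_eq_of_forall_adj {V X : Type*} {G : SimpleGraph V}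
    {p : V → X} (hp : ∀ x y, G.Adj x y → p x = p y) {u v : V} (h : G.Reachable u v) :
    p u = p v := by
  obtain ⟨w⟩ := h
  induction w with
  | nil => rfl
  | cons hadj _ ih => exact (hp _ _ hadj).trans ih

theorem card_filter_exists_mem_le {α β γ : Type*} [Fintype α] [Fintype γ] {f : α → Set β}
    (hf : Pairwise (Disjoint on f)) (g : γ → β) [DecidablePred fun a => ∃ c, g c ∈ f a] :
    #{a | ∃ c, g c ∈ f a} ≤ Fintype.card γ :=
  card_le_card_of_forall_subsingleton (fun a c => g c ∈ f a)
    (fun a ha => by simpa using ha)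
    (fun c _ a₁ ha₁ a₂ ha₂ => hf.eq (Set.not_disjoint_iff.mpr ⟨g c, ha₁.2, ha₂.2⟩))

section joinG

variable {α β : Type*} (G : SimpleGraph α) (H : SimpleGraph β)

@[simp] theorem joinG_adj_inl_inl {a b : α} : (joinG G H).Adj (inl a) (inl b) ↔ G.Adj a b :=
  Iff.rfl

@[simp] theorem joinG_adj_inr_inr {a b : β} : (joinG G H).Adj (inr a) (inr b) ↔ H.Adj a b :=
  Iff.rfl

@[simp] theorem joinG_adj_inl_inr {a : α} {b : β} : (joinG G H).Adj (inl a) (inr b) := trivial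

@[simp] theorem joinG_adj_inr_inl {a : α} {b : β} : (joinG G H).Adj (inr b) (inl a) := trivial

instance [DecidableRel G.Adj] [DecidableRel H.Adj] : DecidableRel (joinG G H).Adj
  | inl a, inl b => decidable_of_iff (G.Adj a b) Iff.rfl
  | inl _, inr _ => .isTrue trivial
  | inr _, inl _ => .isTrue trivial
  | inr a, inr b => decidable_of_iff (H.Adj a b) Iff.rfl

variable [Fintype α] [Fintype β] [DecidableRel G.Adj] [DecidableRel H.Adj]

theorem neighborFinset_joinG_inl (a : α) :
    (joinG G H).neighborFinset (inl a) = (G.neighborFinset a).disjSum univ := by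
  ext (b | b) <;> simp

theorem neighborFinset_joinG_inr (b : β) :
    (joinG G H).neighborFinset (inr b) = univ.disjSum (H.neighborFinset b) := by
  ext (a | a) <;> simp

theorem degree_joinG_inl (a : α) : (joinG G H).degree (inl a) = G.degree a + Fintype.card β := by
  rw [← card_neighborFinset_eq_degree, neighborFinset_joinG_inl, card_disjSum, card_univ,
    card_neighborFinset_eq_degree]

theorem degree_joinG_inr (b : β) : (joinG G H).degree (inr b) = Fintype.card α + H.degree b := by
  rw [← card_neighborFinset_eq_degree, neighborFinset_joinG_inr, card_disjSum, card_univ,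
    card_neighborFinset_eq_degree]

theorem card_edgeFinset_joinG [DecidableEq α] [DecidableEq β] :
    #(joinG G H).edgeFinset =
      #G.edgeFinset + #H.edgeFinset + Fintype.card α * Fintype.card β := by
  have h := (joinG G H).sum_degrees_eq_twice_card_edges
  rw [Fintype.sum_sum_type] at h
  simp only [degree_joinG_inl, degree_joinG_inr, sum_add_distrib, sum_const, card_univ,
    smul_eq_mul, sum_degrees_eq_twice_card_edges] at h
  linarith

end joinG

section matchingGraph

variable {m : ℕ}

instance : DecidableRel (matchingGraph m).Adj := fun _ _ => inferInstanceAs (Decidable (_ ∧ _))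

theorem degree_matchingGraph (hm : Even m) (a : Fin m) : (matchingGraph m).degree a = 1 := by
  rw [degree_eq_one_iff_existsUnique_adj]
  obtain ⟨k, rfl⟩ := hm
  have ha := a.isLt
  have hlt : (if a.val % 2 = 0 then a.val + 1 else a.val - 1) < k + k := by split <;> omega
  obtain ⟨b, hb⟩ : ∃ b : Fin (k + k),
      b.val = if a.val % 2 = 0 then a.val + 1 else a.val - 1 := ⟨⟨_, hlt⟩, rfl⟩
  refine ⟨b, ⟨fun h => ?_, ?_⟩, fun c ⟨hne, hdiv⟩ => ?_⟩
  · have := congrArg Fin.val h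
    split at hb <;> omega
  · split at hb <;> omega
  · have := Fin.val_ne_of_ne hne
    rw [Fin.ext_iff]
    split at hb <;> omega

theorem card_edgeFinset_matchingGraph (hm : Even m) : #(matchingGraph m).edgeFinset = m / 2 := by
  have h := (matchingGraph m).sum_degrees_eq_twice_card_edges
  simp only [degree_matchingGraph hm, sum_const, card_univ, Fintype.card_fin, smul_eq_mul,
    mul_one] at h
  omega

theorem div_two_eq_of_connected_induce_joinG {γ : Type*} (G : SimpleGraph γ)
    {s : Set (γ ⊕ Fin m)} (hs : ∀ c, inl c ∉ s)
    (hconn : ((joinG G (matchingGraph m)).induce s).Connected) {a b : Fin m} (ha : inr a ∈ s)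
    (hb : inr b ∈ s) : a.val / 2 = b.val / 2 := by
  refine (hconn.preconnected ⟨_, ha⟩ ⟨_, hb⟩).apply_eq_of_forall_adj
    (p := fun x => Sum.elim (fun _ => 0) (fun a : Fin m => a.val / 2) x.1) ?_
  rintro ⟨x | x, hx⟩ ⟨y | y, hy⟩ h
  · exact (hs x hx).elim
  · exact (hs x hx).elim
  · exact (hs y hy).elim
  · exact h.2

end matchingGraph

def MatchingAfterDeleting {α : Type*} (G : SimpleGraph α) (k : ℕ) : Prop :=
  ∃ T : Finset α, T.card ≤ k ∧
    ∀ v ∉ T, ∀ w₁ ∉ T, ∀ w₂ ∉ T, G.Adj v w₁ → G.Adj v w₂ → w₁ = w₂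

instance {α : Type*} [Fintype α] [DecidableEq α] (G : SimpleGraph α) [DecidableRel G.Adj]
    (k : ℕ) : Decidable (MatchingAfterDeleting G k) := by
  unfold MatchingAfterDeleting; infer_instance

theorem matchingAfterDeleting_of_isMinor_joinG {α γ : Type*} [Fintype α] [Fintype γ]
    {F : SimpleGraph α} {G : SimpleGraph γ} {m : ℕ} (h : IsMinor F (joinG G (matchingGraph m))) :
    MatchingAfterDeleting F (Fintype.card γ) := by
  classical
  obtain ⟨f, -, hconn, hdisj, hadj⟩ := h
  refine ⟨({a | ∃ c, inl c ∈ f a} : Finset α), card_filter_exists_mem_le hdisj inl, ?_⟩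
  intro v hv w₁ hw₁ w₂ hw₂ h₁ h₂
  by_contra hne
  simp only [mem_filter, mem_univ, true_and, not_exists] at hv hw₁ hw₂
  have exists_inr : ∀ {u}, (∀ c, inl c ∉ f u) → ∀ x ∈ f u, ∃ b, x = inr b := by
    rintro u hu (c | b) hx
    exacts [(hu c hx).elim, ⟨b, rfl⟩]
  obtain ⟨x₁, hx₁, y₁, hy₁, hxy₁⟩ := hadj v w₁ h₁
  obtain ⟨x₂, hx₂, y₂, hy₂, hxy₂⟩ := hadj v w₂ h₂
  obtain ⟨a₁, rfl⟩ := exists_inr hv x₁ hx₁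
  obtain ⟨a₂, rfl⟩ := exists_inr hv x₂ hx₂
  obtain ⟨b₁, rfl⟩ := exists_inr hw₁ y₁ hy₁
  obtain ⟨b₂, rfl⟩ := exists_inr hw₂ y₂ hy₂
  obtain ⟨hab₁, hdiv₁⟩ := hxy₁
  obtain ⟨-, hdiv₂⟩ := hxy₂
  have hdiv := div_two_eq_of_connected_induce_joinG G hv (hconn v) hx₁ hx₂
  have hbb : b₁ ≠ b₂ := fun h => Set.disjoint_left.mp (hdisj _ _ hne) hy₁ (h ▸ hy₂)
  have hab₂ : a₁ ≠ b₂ := fun h => Set.disjoint_left.mp (hdisj _ _ h₂.ne) hx₁ (h ▸ hy₂)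
  have := Fin.val_ne_of_ne hab₁
  have := Fin.val_ne_of_ne hab₂
  have := Fin.val_ne_of_ne hbb
  -- `a₁`, `b₁`, `b₂` would be three distinct vertices of one matching edge
  omega

instance : DecidableRel K6minus.Adj := fun _ _ => inferInstanceAs (Decidable (_ ∧ _))
instance : DecidableRel C7c.Adj := fun _ _ => inferInstanceAs (Decidable (_ ∧ _))
instance : DecidableRel C5K2c.Adj := inferInstanceAs (DecidableRel (joinG _ _).Adj)
instance : DecidableRel K313hat.Adj := fun _ _ => inferInstanceAs (Decidable (_ ∧ _))
instance : DecidableRel Q3.Adj := fun _ _ => inferInstanceAs (Decidable (_ ∨ _))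
instance : DecidableRel V8.Adj := fun _ _ => inferInstanceAs (Decidable (_ ∧ _))

set_option maxRecDepth 8000 in
theorem not_hasF3Minor_of_forall_isMinor {β : Type*} {G : SimpleGraph β}
    (hG : ∀ {α : Type} [Fintype α] {F : SimpleGraph α}, IsMinor F G → MatchingAfterDeleting F 3) :
    ¬ HasF3Minor G := by
  rintro (h | h | h | h | h | h) <;> exact absurd (hG h) (by decide)

theorem not_hasF3Minor_joinG_matchingGraph (G : SimpleGraph (Fin 3)) (m : ℕ) :
    ¬ HasF3Minor (joinG G (matchingGraph m)) :=
  not_hasF3Minor_of_forall_isMinor fun h => by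
    simpa using matchingAfterDeleting_of_isMinor_joinG h

/-- For every odd `n ≥ 3`, the join of `K₃` with a perfect matching on
`n - 3` vertices has exactly `(7n-15)/2` edges and no minor in `𝓕₃`. -/
theorem joinK3Matching_extremal (n : ℕ) (hn : 3 ≤ n) (hodd : Odd n) :
    (joinG (⊤ : SimpleGraph (Fin 3)) (matchingGraph (n - 3))).edgeSet.ncard =
        (7 * n - 15) / 2 ∧
    ¬ HasF3Minor (joinG (⊤ : SimpleGraph (Fin 3)) (matchingGraph (n - 3))) := by
  refine ⟨?_, not_hasF3Minor_joinG_matchingGraph ⊤ (n - 3)⟩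
  obtain ⟨k, rfl⟩ := hodd
  have hm : Even (2 * k + 1 - 3) := ⟨k - 1, by omega⟩
  rw [Set.ncard_eq_toFinset_card', ← edgeFinset, card_edgeFinset_joinG,
    card_edgeFinset_top_eq_card_choose_two, card_edgeFinset_matchingGraph hm]
  norm_num [Nat.choose]
  omega

end TwwPaper
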